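/- arXiv:2308.01685 — 2 statements merged into one kernel-verified Lean document; each statement's English description precedes it below -/
import Mathlib

section
/- For every bipartite graph G with μ(G) > 0, a(G) - α(G) ≤ 2 + μ(G) - 2√(1 + μ(G)). -/
open Finset

namespace AnnPaper

variable {V : Type*}

/-- A finset of vertices is independent: no two of its members are adjacent. -/
def IsIndepFinset (G : SimpleGraph V) (s : Finset V) : Prop :=
  ∀ a ∈ s, ∀ b ∈ s, ¬ G.Adj a b

/-- The independence number `α(G)`. -/
noncomputable def indepNum (G : SimpleGraph V) : ℕ :=
  sSup {k | ∃ s : Finset V, IsIndepFinset G s ∧ s.card = k}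

/-- A finset of edges is a matching: edges of `G`, pairwise vertex-disjoint. -/
def IsMatchingFinset (G : SimpleGraph V) (s : Finset (Sym2 V)) : Prop :=
  (↑s ⊆ G.edgeSet) ∧ ∀ e ∈ s, ∀ f ∈ s, e ≠ f → ∀ v : V, v ∈ e → v ∉ f

/-- The matching number `μ(G)`. -/
noncomputable def matchNum (G : SimpleGraph V) : ℕ :=
  sSup {k | ∃ s : Finset (Sym2 V), IsMatchingFinset G s ∧ s.card = k}

/-- The number of edges `m(G)`. -/
noncomputable def edgeCount (G : SimpleGraph V) : ℕ := G.edgeSet.ncard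

/-- The degree of a vertex. -/
noncomputable def deg (G : SimpleGraph V) (v : V) : ℕ := (G.neighborSet v).ncard

/-- The annihilation number `a(G)`: the largest `k` such that the sum of the `k`
smallest degrees is at most `m(G)`; equivalently, the largest cardinality of a
set of vertices whose degree sum is at most `m(G)`. -/
noncomputable def annNum (G : SimpleGraph V) : ℕ :=
  sSup {k | ∃ A : Finset V, A.card = k ∧ ∑ v ∈ A, deg G v ≤ edgeCount G}

/-- The number of edges of the subgraph induced on a set of vertices. -/
noncomputable def inducedEdgeCount (G : SimpleGraph V) (A : Set V) : ℕ :=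
  (SimpleGraph.induce A G).edgeSet.ncard

/-!
Let `A` be a set of `a(G)` vertices whose degree sum is at most `m(G)`, and let `t = |Aᶜ|`.
Every edge has `1 + [e ⊆ A] - [e ⊆ Aᶜ]` ends in `A`, so the degree condition says that no more
edges lie inside `A` than inside `Aᶜ`, and inside `Aᶜ` a bipartite graph has at most `t² / 4`
edges. A maximum matching has at most `t` edges meeting `Aᶜ` and the others lie inside `A`,
hence `4μ ≤ t² + 4t`, i.e. `2√(1 + μ) ≤ t + 2`. Finally `a = n - t ≤ α + μ - t` by
König–Egerváry, which follows from Hall's theorem applied with the maximum deficiency.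
-/

theorem _root_.Finset.exists_injOn_of_card_le_card_biUnion_add {ι α : Type*} [DecidableEq α]
    [Nonempty α] (X : Finset ι) (t : ι → Finset α) (d : ℕ)
    (h : ∀ s ⊆ X, #s ≤ #(s.biUnion t) + d) :
    ∃ K ⊆ X, #X ≤ #K + d ∧ ∃ f : ι → α, Set.InjOn f K ∧ ∀ i ∈ K, f i ∈ t i := by
  classical
  -- `d` new elements, available to every `i`, turn the deficiency condition into Hall's condition
  let t' : X → Finset (α ⊕ Fin d) := fun i => (t i).disjSum univ
  have hall : ∀ s : Finset X, #s ≤ #(s.biUnion t') := by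
    intro s
    rcases s.eq_empty_or_nonempty with rfl | ⟨i₀, hi₀⟩
    · simp
    have hs : s.biUnion t' = ((s.map (.subtype _)).biUnion t).disjSum univ := by
      ext (a | b) <;> simp [t']
      exact ⟨_, _, hi₀⟩
    rw [hs, card_disjSum, card_univ, Fintype.card_fin, ← card_map (.subtype _)]
    exact h _ fun i => property_of_mem_map_subtype s
  obtain ⟨g, hg, hgt⟩ := (all_card_le_biUnion_card_iff_exists_injective t').1 hall
  let L : Finset X := {i | (g i).isLeft}
  let f : ι → α := fun i =>
    if hi : i ∈ X then (g ⟨i, hi⟩).elim id fun _ => Classical.arbitrary α else Classical.arbitrary α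
  have hf : ∀ i ∈ L, g i = .inl (f i) := by
    rintro ⟨i, hi⟩ hiL
    obtain ⟨a, ha⟩ := Sum.isLeft_iff.1 (mem_filter.1 hiL).2
    simp [f, hi, ha]
  have hcompl : #{i | ¬ (g i).isLeft} ≤ d := by
    simpa using card_le_card_of_forall_subsingleton (fun i b => g i = .inr b)
      (s := {i | ¬ (g i).isLeft}) (t := univ)
      (fun i hi => by simpa [eq_comm] using Sum.isRight_iff.1 (by simpa using (mem_filter.1 hi).2))
      (fun b _ i hi j hj => hg (hi.2.trans hj.2.symm))
  refine ⟨L.map (.subtype _), fun i => property_of_mem_map_subtype L, ?_, f, ?_, ?_⟩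
  · have := card_filter_add_card_filter_not (s := (univ : Finset X)) (fun i => (g i).isLeft)
    rw [card_univ, Fintype.card_coe] at this
    rw [card_map]
    simp only [L]
    omega
  · simp only [coe_map, Set.InjOn, Set.mem_image, mem_coe]
    rintro _ ⟨i, hi, rfl⟩ _ ⟨j, hj, rfl⟩ hij
    exact congrArg Subtype.val (hg (by rw [hf i hi, hf j hj]; exact congrArg Sum.inl hij))
  · simp only [mem_map]
    rintro _ ⟨i, hi, rfl⟩
    simpa [t', hf i hi] using hgt i

section Invariants

variable [Fintype V] {G : SimpleGraph V}

theorem IsIndepFinset.card_le_indepNum {s : Finset V} (h : IsIndepFinset G s) :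
    #s ≤ indepNum G :=
  le_csSup ⟨Fintype.card V, by rintro k ⟨s, -, rfl⟩; exact s.card_le_univ⟩ ⟨s, h, rfl⟩

theorem IsMatchingFinset.card_le_matchNum {M : Finset (Sym2 V)} (h : IsMatchingFinset G M) :
    #M ≤ matchNum G := by
  classical
  exact le_csSup ⟨Fintype.card (Sym2 V), by rintro k ⟨M, -, rfl⟩; exact M.card_le_univ⟩
    ⟨M, h, rfl⟩

variable (G)

theorem exists_isMatchingFinset_card_eq_matchNum :
    ∃ M : Finset (Sym2 V), IsMatchingFinset G M ∧ #M = matchNum G := by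
  classical
  exact Nat.sSup_mem (s := {k | ∃ M : Finset (Sym2 V), IsMatchingFinset G M ∧ #M = k})
    ⟨0, ∅, ⟨by simp, by simp⟩, rfl⟩
    ⟨Fintype.card (Sym2 V), by rintro k ⟨M, -, rfl⟩; exact M.card_le_univ⟩

theorem exists_card_eq_annNum :
    ∃ A : Finset V, #A = annNum G ∧ ∑ v ∈ A, deg G v ≤ edgeCount G :=
  Nat.sSup_mem (s := {k | ∃ A : Finset V, #A = k ∧ ∑ v ∈ A, deg G v ≤ edgeCount G})
    ⟨0, ∅, by simp, by simp⟩ ⟨Fintype.card V, by rintro k ⟨A, rfl, -⟩; exact A.card_le_univ⟩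

theorem deg_eq_degree [DecidableRel G.Adj] (v : V) : deg G v = G.degree v := by
  rw [deg, ← SimpleGraph.card_neighborFinset_eq_degree, ← Set.ncard_coe_finset,
    SimpleGraph.coe_neighborFinset]

theorem edgeCount_eq_card_edgeFinset [DecidableRel G.Adj] : edgeCount G = #G.edgeFinset := by
  rw [edgeCount, ← SimpleGraph.coe_edgeFinset, Set.ncard_coe_finset]

end Invariants

section Konig

variable {G : SimpleGraph V}

theorem IsIndepFinset.union_sdiff_biUnion_neighborFinset [Fintype V] [DecidableEq V]
    [DecidableRel G.Adj] {s t : Finset V} (hs : IsIndepFinset G s) (ht : IsIndepFinset G t) :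
    IsIndepFinset G (s ∪ (t \ s.biUnion fun v => G.neighborFinset v)) := by
  intro a ha b hb hab
  simp only [mem_union, mem_sdiff, mem_biUnion, SimpleGraph.mem_neighborFinset, not_exists,
    not_and] at ha hb
  rcases ha with ha | ⟨ha, ha'⟩ <;> rcases hb with hb | ⟨hb, hb'⟩
  · exact hs a ha b hb hab
  · exact hb' a ha hab
  · exact ha' b hb hab.symm
  · exact ht a ha b hb hab

theorem isIndepFinset_colorClass [Fintype V] {α : Type*} [DecidableEq α] (c : G.Coloring α)
    (i : α) : IsIndepFinset G {v | c v = i} := by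
  intro a ha b hb hab
  exact c.valid hab (by simp_all)

theorem card_le_matchNum_of_injOn [Fintype V] {K : Finset V} {f : V → V}
    (hadj : ∀ v ∈ K, G.Adj v (f v)) (hinj : Set.InjOn f K) (hK : ∀ v ∈ K, f v ∉ K) :
    #K ≤ matchNum G := by
  classical
  have hpair : Set.InjOn (fun v => s(v, f v)) K := by
    intro v hv w hw h
    rcases Sym2.eq_iff.1 h with ⟨hvw, -⟩ | ⟨hvw, -⟩
    · exact hvw
    · exact absurd (hvw ▸ hv) (hK w hw)
  rw [← card_image_of_injOn hpair]
  refine IsMatchingFinset.card_le_matchNum ⟨?_, ?_⟩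
  · intro e he
    obtain ⟨v, hv, rfl⟩ := mem_image.1 he
    exact hadj v hv
  · simp only [mem_image]
    rintro _ ⟨v, hv, rfl⟩ _ ⟨w, hw, rfl⟩ hne u hu hu'
    simp only [Sym2.mem_iff] at hu hu'
    rcases hu with rfl | rfl <;> rcases hu' with h | h
    · exact hne (by rw [h])
    · exact hK w hw (h ▸ hv)
    · exact hK v hv (h ▸ hw)
    · exact hne (by rw [hinj hv hw h])

theorem card_le_indepNum_add_matchNum [Fintype V] (hG : G.Colorable 2) :
    Fintype.card V ≤ indepNum G + matchNum G := by
  classical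
  obtain ⟨c⟩ := hG
  cases isEmpty_or_nonempty V
  · simp
  let X : Finset V := {v | c v = 0}
  let Y : Finset V := {v | c v = 1}
  let N : Finset V → Finset V := fun s => s.biUnion fun v => G.neighborFinset v
  have hcard : Fintype.card V = #X + #Y := by
    rw [← card_univ, card_eq_sum_card_fiberwise (f := c) (t := univ) (by simp), Fin.sum_univ_two]
  have hXY : Disjoint X Y := disjoint_filter.2 fun v _ h0 h1 => by simp [h0] at h1
  have hadjX : ∀ v ∈ X, ∀ w, G.Adj v w → w ∈ Y := by
    intro v hv w hvw
    simp only [X, Y, mem_filter, mem_univ, true_and] at hv ⊢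
    exact Fin.eq_one_of_ne_zero _ fun hw => c.valid hvw (hv.trans hw.symm)
  -- `S` has maximum deficiency `d = #S - #(N S)`: Hall's condition holds up to `d`, and
  -- `S ∪ (Y \ N S)` is an independent set with at least `#Y + d` vertices.
  obtain ⟨S, hSX, hSmax⟩ :=
    X.powerset.exists_max_image (fun s => (#s : ℤ) - #(N s)) ⟨∅, empty_mem_powerset X⟩
  rw [mem_powerset] at hSX
  have hS : #(N S) ≤ #S := by simpa [N] using hSmax ∅ (empty_mem_powerset X)
  obtain ⟨K, hKX, hKcard, f, hfinj, hf⟩ := X.exists_injOn_of_card_le_card_biUnion_add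
    (fun v => G.neighborFinset v) (#S - #(N S)) fun s hs => by
      have := hSmax s (mem_powerset.2 hs); change #s ≤ #(N s) + _; omega
  have hmatch : #K ≤ matchNum G := by
    have hadj : ∀ v ∈ K, G.Adj v (f v) := fun v hv => (G.mem_neighborFinset _ _).1 (hf v hv)
    exact card_le_matchNum_of_injOn hadj hfinj fun v hv hfv =>
      disjoint_left.1 hXY (hKX hfv) (hadjX v (hKX hv) _ (hadj v hv))
  have hindep : #S + #(Y \ N S) ≤ indepNum G := by
    have hI := IsIndepFinset.union_sdiff_biUnion_neighborFinset
      (fun a ha b hb => isIndepFinset_colorClass c 0 a (hSX ha) b (hSX hb))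
      (isIndepFinset_colorClass c 1)
    rw [← card_union_of_disjoint (hXY.mono hSX sdiff_subset)]
    exact hI.card_le_indepNum
  have := le_card_sdiff (N S) Y
  omega

end Konig

section EdgeCounting

variable [Fintype V] [DecidableEq V] (G : SimpleGraph V) [DecidableRel G.Adj]

theorem sum_degree_eq_sum_card_filter_mem (s : Finset V) :
    ∑ v ∈ s, G.degree v = ∑ e ∈ G.edgeFinset, #{v ∈ s | v ∈ e} := by
  simp_rw [← G.card_incidenceFinset_eq_degree, G.incidenceFinset_eq_filter]
  exact sum_card_bipartiteAbove_eq_sum_card_bipartiteBelow (fun v e => v ∈ e)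

theorem card_filter_mem_add_ite_mem_sym2_compl {e : Sym2 V} (he : ¬ e.IsDiag) (s : Finset V) :
    #{v ∈ s | v ∈ e} + (if e ∈ sᶜ.sym2 then 1 else 0) = 1 + if e ∈ s.sym2 then 1 else 0 := by
  induction e using Sym2.ind with
  | _ x y =>
    have hxy : x ≠ y := by simpa using he
    by_cases hx : x ∈ s <;> by_cases hy : y ∈ s <;>
      simp [hx, hy, Sym2.mem_iff, filter_or, filter_eq', card_pair hxy]

theorem sum_degree_add_card_edges_within_compl (s : Finset V) :
    ∑ v ∈ s, G.degree v + #{e ∈ G.edgeFinset | e ∈ sᶜ.sym2} =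
      #G.edgeFinset + #{e ∈ G.edgeFinset | e ∈ s.sym2} := by
  rw [sum_degree_eq_sum_card_filter_mem, card_filter, card_filter, card_eq_sum_ones,
    ← sum_add_distrib, ← sum_add_distrib]
  exact sum_congr rfl fun e he =>
    card_filter_mem_add_ite_mem_sym2_compl (G.not_isDiag_of_mem_edgeSet (G.mem_edgeFinset.1 he)) s

theorem four_mul_card_edges_within_le_sq (hG : G.Colorable 2) (s : Finset V) :
    4 * #{e ∈ G.edgeFinset | e ∈ s.sym2} ≤ #s ^ 2 := by
  obtain ⟨c⟩ := hG
  let s₀ : Finset V := {v ∈ s | c v = 0}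
  let s₁ : Finset V := {v ∈ s | ¬ c v = 0}
  have hcover : {e ∈ G.edgeFinset | e ∈ s.sym2} ⊆ (s₀ ×ˢ s₁).image fun p => s(p.1, p.2) := by
    intro e he
    rw [mem_filter, SimpleGraph.mem_edgeFinset, mem_sym2_iff] at he
    obtain ⟨hadj, hs⟩ := he
    induction e using Sym2.ind with
    | _ x y =>
      have hx := hs x (Sym2.mem_mk_left x y)
      have hy := hs y (Sym2.mem_mk_right x y)
      have hc : c x ≠ c y := c.valid hadj
      by_cases hx0 : c x = 0
      · have hy0 : c y ≠ 0 := fun hy0 => hc (hx0.trans hy0.symm)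
        exact mem_image.2 ⟨(x, y), by simp [s₀, s₁, hx, hy, hx0, hy0], rfl⟩
      · have hy0 : c y = 0 := by
          by_contra hy0
          exact hc ((Fin.eq_one_of_ne_zero _ hx0).trans (Fin.eq_one_of_ne_zero _ hy0).symm)
        exact mem_image.2 ⟨(y, x), by simp [s₀, s₁, hx, hy, hy0, hx0], Sym2.eq_swap⟩
  have hsplit : #s₀ + #s₁ = #s := card_filter_add_card_filter_not _
  calc 4 * #{e ∈ G.edgeFinset | e ∈ s.sym2} ≤ 4 * (#s₀ * #s₁) := by
        grw [card_le_card hcover, card_image_le, card_product]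
    _ ≤ (#s₀ + #s₁) ^ 2 := by nlinarith [sq_nonneg ((#s₀ : ℤ) - #s₁)]
    _ = #s ^ 2 := by rw [hsplit]

theorem IsMatchingFinset.card_le_card_edges_within_add {M : Finset (Sym2 V)}
    (hM : IsMatchingFinset G M) (s : Finset V) :
    #M ≤ #{e ∈ G.edgeFinset | e ∈ s.sym2} + #sᶜ := by
  rw [← card_filter_add_card_filter_not (s := M) (fun e : Sym2 V => e ∈ s.sym2)]
  gcongr
  · exact fun e he => G.mem_edgeFinset.2 (hM.1 he)
  · refine card_le_card_of_forall_subsingleton (fun e v => v ∈ e) (fun e he => ?_) ?_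
    · obtain ⟨-, he⟩ := mem_filter.1 he
      simpa [mem_sym2_iff, and_comm] using he
    · intro v _ e he e' he'
      by_contra hne
      exact hM.2 e (mem_filter.1 he.1).1 e' (mem_filter.1 he'.1).1 hne v he.2 he'.2

end EdgeCounting

theorem four_mul_matchNum_le [Fintype V] [DecidableEq V] {G : SimpleGraph V} (hG : G.Colorable 2)
    {A : Finset V} (hA : ∑ v ∈ A, deg G v ≤ edgeCount G) :
    4 * matchNum G ≤ #Aᶜ ^ 2 + 4 * #Aᶜ := by
  classical
  obtain ⟨M, hM, hMcard⟩ := exists_isMatchingFinset_card_eq_matchNum G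
  have hAsum : ∑ v ∈ A, G.degree v ≤ #G.edgeFinset := by
    simpa only [deg_eq_degree, edgeCount_eq_card_edgeFinset] using hA
  have hsplit := sum_degree_add_card_edges_within_compl G A
  have hmatch := hM.card_le_card_edges_within_add G A
  have hbip := four_mul_card_edges_within_le_sq G hG Aᶜ
  omega

theorem stmt13_general {V : Type*} [Fintype V] (G : SimpleGraph V) (hbip : G.Colorable 2) :
    (annNum G : ℝ) - (indepNum G : ℝ) ≤
      2 + (matchNum G : ℝ) - 2 * Real.sqrt (1 + (matchNum G : ℝ)) := by
  classical
  obtain ⟨A, hAcard, hA⟩ := exists_card_eq_annNum G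
  have hn : #A + #Aᶜ = Fintype.card V := card_add_card_compl A
  have hkonig := card_le_indepNum_add_matchNum hbip
  have hmatch : (4 * matchNum G : ℝ) ≤ #Aᶜ ^ 2 + 4 * #Aᶜ := by
    exact_mod_cast four_mul_matchNum_le hbip hA
  have hsqrt : √(1 + (matchNum G : ℝ)) ≤ (#Aᶜ + 2) / 2 :=
    Real.sqrt_le_iff.2 ⟨by positivity, by nlinarith⟩
  have hsize : (#A : ℝ) + #Aᶜ ≤ indepNum G + matchNum G := by exact_mod_cast hn ▸ hkonig
  rw [← hAcard]
  linarith

theorem stmt13 {V : Type*} [Fintype V] (G : SimpleGraph V) (hbip : G.Colorable 2)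
    (hmu : 0 < matchNum G) :
    (annNum G : ℝ) - (indepNum G : ℝ) ≤
      2 + (matchNum G : ℝ) - 2 * Real.sqrt (1 + (matchNum G : ℝ)) :=
  stmt13_general G hbip

end AnnPaper
end

section
/- For every integer p ≥ 3, there exists a bipartite graph G with μ(G) = p² - 1, α(G) = p² - 1, a(G) = 2p² - 2p, and m(G) = 2p² - 2, so that a(G) - α(G) = (p-1)² = 2 + μ(G) - 2√(1 + μ(G)); hence the bipartite bound is tight for infinitely many values of μ. -/
open Finset

namespace AnnPaper

variable {V : Type*}

/-!
The graph is the corona `H ∘ K₁` of `H = a K₁ ⊔ (K_{q,q} ∘ K₁)`, where the corona hangs one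
pendant vertex on every vertex. Each pendant edge of a corona is a matching edge, so the corona
of a graph on `n` vertices has a perfect matching of size `n`, which bounds every independent set
by `n`; the `n` pendant vertices attain it. Its degrees are those of `H` raised by one, plus `n`
ones, so the degree sequence is explicit: dropping the `2q` vertices of `K_{q,q}`, of degree
`q + 2`, leaves degree sum exactly `m`, while dropping fewer than `2q` vertices leaves more than
`m`. With `q = p - 1` and `a = (p - 1)(p - 3)` this gives the stated values.
-/

section Iso

variable {W : Type*} {G : SimpleGraph V} {G' : SimpleGraph W}

lemma deg_congr (f : G ≃g G') (v : V) : deg G' (f v) = deg G v := by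
  simp only [deg, ← Nat.card_coe_set_eq]
  exact Nat.card_congr (f.mapNeighborSet v).symm

lemma edgeCount_congr (f : G ≃g G') : edgeCount G' = edgeCount G := by
  simp only [edgeCount, ← Nat.card_coe_set_eq]
  exact Nat.card_congr f.mapEdgeSet.symm

lemma IsIndepFinset.map (f : G ≃g G') {s : Finset V} (hs : IsIndepFinset G s) :
    IsIndepFinset G' (s.map f.toEquiv.toEmbedding) := by
  simp only [IsIndepFinset, mem_map]
  rintro _ ⟨u, hu, rfl⟩ _ ⟨v, hv, rfl⟩ h
  exact hs u hu v hv (f.map_adj_iff.mp h)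

lemma IsMatchingFinset.map (f : G ≃g G') {s : Finset (Sym2 V)} (hs : IsMatchingFinset G s) :
    IsMatchingFinset G' (s.map f.toEquiv.toEmbedding.sym2Map) := by
  refine ⟨?_, ?_⟩
  · intro _ he'
    obtain ⟨e, he, rfl⟩ := mem_map.mp he'
    exact f.map_mem_edgeSet_iff.mpr (hs.1 he)
  · intro _ he' _ hg' hef _ hve hvf
    obtain ⟨e, he, rfl⟩ := mem_map.mp he'
    obtain ⟨g, hg, rfl⟩ := mem_map.mp hg'
    obtain ⟨u, hu, rfl⟩ := Sym2.mem_map.mp hve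
    obtain ⟨w, hw, hwu⟩ := Sym2.mem_map.mp hvf
    obtain rfl := f.injective hwu
    exact hs.2 e he g hg (fun h => hef (h ▸ rfl)) w hu hw

lemma indepNum_congr (f : G ≃g G') : indepNum G = indepNum G' := by
  unfold indepNum
  congr 1
  ext k
  constructor
  · rintro ⟨s, hs, rfl⟩
    exact ⟨_, hs.map f, card_map _⟩
  · rintro ⟨s, hs, rfl⟩
    exact ⟨_, hs.map f.symm, card_map _⟩

lemma matchNum_congr (f : G ≃g G') : matchNum G = matchNum G' := by
  unfold matchNum
  congr 1
  ext k
  constructor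
  · rintro ⟨s, hs, rfl⟩
    exact ⟨_, hs.map f, card_map _⟩
  · rintro ⟨s, hs, rfl⟩
    exact ⟨_, hs.map f.symm, card_map _⟩

lemma sum_deg_map (f : G ≃g G') (s : Finset V) :
    ∑ v ∈ s.map f.toEquiv.toEmbedding, deg G' v = ∑ v ∈ s, deg G v := by
  simp [deg_congr]

lemma annNum_congr (f : G ≃g G') : annNum G = annNum G' := by
  unfold annNum
  congr 1
  ext k
  constructor
  · rintro ⟨s, rfl, hs⟩
    refine ⟨s.map f.toEquiv.toEmbedding, card_map _, ?_⟩
    rwa [sum_deg_map, edgeCount_congr f]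
  · rintro ⟨s, rfl, hs⟩
    refine ⟨s.map f.symm.toEquiv.toEmbedding, card_map _, ?_⟩
    rwa [sum_deg_map, ← edgeCount_congr f]

end Iso

section Counting

variable [Fintype V] {G : SimpleGraph V}

lemma sum_deg_eq_two_mul_edgeCount (G : SimpleGraph V) : ∑ v, deg G v = 2 * edgeCount G := by
  classical
  rw [edgeCount, Set.ncard_eq_toFinset_card', ← SimpleGraph.edgeFinset,
    ← SimpleGraph.sum_degrees_eq_twice_card_edges]
  congr 1 with v
  rw [deg, Set.ncard_eq_toFinset_card', ← SimpleGraph.neighborFinset,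
    SimpleGraph.card_neighborFinset_eq_degree]

lemma two_mul_card_le_of_isMatchingFinset {s : Finset (Sym2 V)} (hs : IsMatchingFinset G s) :
    2 * #s ≤ Fintype.card V := by
  classical
  have hdisj : (s : Set (Sym2 V)).PairwiseDisjoint Sym2.toFinset := by
    intro e he f hf hef
    simp only [Function.onFun, Finset.disjoint_left, Sym2.mem_toFinset]
    exact hs.2 e he f hf hef
  calc 2 * #s = ∑ e ∈ s, #e.toFinset := by
        rw [sum_congr rfl fun e he => Sym2.card_toFinset_of_not_isDiag e
          (G.not_isDiag_of_mem_edgeSet (hs.1 he)), sum_const, smul_eq_mul, mul_comm]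
    _ = #(s.biUnion Sym2.toFinset) := (card_biUnion hdisj).symm
    _ ≤ Fintype.card V := card_le_univ _

lemma sub_card_le_annNum (S : Finset V) (hS : edgeCount G ≤ ∑ v ∈ S, deg G v) :
    Fintype.card V - #S ≤ annNum G := by
  classical
  have hbdd : BddAbove {k | ∃ A : Finset V, #A = k ∧ ∑ v ∈ A, deg G v ≤ edgeCount G} :=
    ⟨Fintype.card V, by rintro _ ⟨A, rfl, -⟩; exact card_le_univ A⟩
  refine le_csSup hbdd ⟨Sᶜ, card_compl S, ?_⟩
  have := sum_compl_add_sum S (deg G)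
  rw [sum_deg_eq_two_mul_edgeCount] at this
  omega

/-- Any set of more than `k` vertices has degree sum at least `2m - (|V| - (k + 1)) Δ > m`. -/
lemma annNum_le {Δ k : ℕ} (hΔ : ∀ v, deg G v ≤ Δ)
    (h : (Fintype.card V - (k + 1)) * Δ < edgeCount G) : annNum G ≤ k := by
  classical
  refine csSup_le' ?_
  rintro _ ⟨A, rfl, hA⟩
  by_contra! hk
  have hcompl : ∑ v ∈ Aᶜ, deg G v ≤ (Fintype.card V - (k + 1)) * Δ :=
    calc ∑ v ∈ Aᶜ, deg G v ≤ #Aᶜ * Δ := sum_le_card_nsmul _ _ _ fun v _ => hΔ v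
      _ ≤ (Fintype.card V - (k + 1)) * Δ := by
        gcongr
        rw [card_compl]
        omega
  have := sum_add_sum_compl A (deg G)
  rw [sum_deg_eq_two_mul_edgeCount] at this
  omega

end Counting

section Corona

/-- The corona `H ∘ K₁`: `(v, false)` is the vertex `v` of `H` and `(v, true)` a new pendant
vertex attached to it. -/
def corona (H : SimpleGraph V) : SimpleGraph (V × Bool) where
  Adj x y := x.1 = y.1 ∧ x.2 ≠ y.2 ∨ x.2 = false ∧ y.2 = false ∧ H.Adj x.1 y.1
  symm := ⟨by
    rintro x y (⟨h₁, h₂⟩ | ⟨h₁, h₂, h₃⟩)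
    exacts [Or.inl ⟨h₁.symm, h₂.symm⟩, Or.inr ⟨h₂, h₁, h₃.symm⟩]⟩
  loopless := ⟨by
    rintro x (⟨-, h⟩ | ⟨-, -, h⟩)
    exacts [h rfl, H.irrefl h]⟩

variable (H : SimpleGraph V)

lemma corona_adj {x y : V × Bool} :
    (corona H).Adj x y ↔ x.1 = y.1 ∧ x.2 ≠ y.2 ∨ x.2 = false ∧ y.2 = false ∧ H.Adj x.1 y.1 :=
  Iff.rfl

lemma corona_adj_pendant (v : V) : (corona H).Adj (v, false) (v, true) := by
  simp [corona_adj]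

lemma neighborSet_corona_true (v : V) : (corona H).neighborSet (v, true) = {(v, false)} := by
  ext ⟨w, b⟩
  cases b <;> simp [corona_adj, eq_comm]

lemma neighborSet_corona_false (v : V) :
    (corona H).neighborSet (v, false) = insert (v, true) ((·, false) '' H.neighborSet v) := by
  ext ⟨w, b⟩
  cases b <;> simp [corona_adj, eq_comm]

lemma deg_corona_true (v : V) : deg (corona H) (v, true) = 1 := by
  rw [deg, neighborSet_corona_true, Set.ncard_singleton]

lemma deg_corona_false [Finite V] (v : V) : deg (corona H) (v, false) = deg H v + 1 := by
  rw [deg, neighborSet_corona_false, Set.ncard_insert_of_notMem (by simp),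
    Set.ncard_image_of_injective _ fun _ _ h => (Prod.mk.inj h).1, deg]

variable {H} in
lemma colorable_corona (h : H.Colorable 2) : (corona H).Colorable 2 := by
  obtain ⟨c⟩ := h
  refine ⟨SimpleGraph.Coloring.mk (fun x => c x.1 + if x.2 then 1 else 0) ?_⟩
  rintro ⟨u, a⟩ ⟨v, b⟩ (⟨rfl, hab⟩ | ⟨rfl, rfl, huv⟩)
  · cases a <;> cases b <;> simp_all
  · simpa using c.valid huv

variable [Fintype V]

lemma edgeCount_corona : edgeCount (corona H) = edgeCount H + Fintype.card V := by
  have hsum := sum_deg_eq_two_mul_edgeCount (corona H)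
  have hH := sum_deg_eq_two_mul_edgeCount H
  simp only [Fintype.sum_prod_type, Fintype.sum_bool, deg_corona_true, deg_corona_false, sum_add_distrib, sum_const,
    card_univ, smul_eq_mul] at hsum
  omega

lemma matchNum_corona : matchNum (corona H) = Fintype.card V := by
  let pendantEdge : V ↪ Sym2 (V × Bool) :=
    ⟨fun v => s((v, false), (v, true)), fun u v h => by simpa using h⟩
  refine IsGreatest.csSup_eq ⟨⟨univ.map pendantEdge, ⟨?_, ?_⟩, by simp⟩, ?_⟩
  · intro e he
    obtain ⟨v, -, rfl⟩ := mem_map.mp he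
    exact corona_adj_pendant H v
  · intro e he f hf hef w hwe hwf
    obtain ⟨u, -, rfl⟩ := mem_map.mp he
    obtain ⟨v, -, rfl⟩ := mem_map.mp hf
    change w ∈ s((u, false), (u, true)) at hwe
    change w ∈ s((v, false), (v, true)) at hwf
    apply hef
    rcases Sym2.mem_iff.mp hwe with rfl | rfl <;> rcases Sym2.mem_iff.mp hwf with h | h <;>
      simp_all
  · rintro _ ⟨s, hs, rfl⟩
    have := two_mul_card_le_of_isMatchingFinset hs
    simp only [Fintype.card_prod, Fintype.card_bool] at this
    omega

lemma indepNum_corona : indepNum (corona H) = Fintype.card V := by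
  let pendant : V ↪ V × Bool := ⟨(·, true), fun u v h => (Prod.mk.inj h).1⟩
  refine IsGreatest.csSup_eq ⟨⟨univ.map pendant, ?_, by simp⟩, ?_⟩
  · intro x hx y hy
    obtain ⟨u, -, rfl⟩ := mem_map.mp hx
    obtain ⟨v, -, rfl⟩ := mem_map.mp hy
    change ¬(corona H).Adj (u, true) (v, true)
    simp [corona_adj]
  · rintro _ ⟨s, hs, rfl⟩
    refine card_le_card_of_injOn Prod.fst (fun _ _ => mem_univ _) fun x hx y hy hxy => ?_
    by_contra hne
    exact hs x hx y hy (Or.inl ⟨hxy, fun h => hne (Prod.ext hxy h)⟩)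

end Corona

section Sum

variable {W : Type*}

@[simp]
lemma deg_bot (v : V) : deg (⊥ : SimpleGraph V) v = 0 := by
  rw [deg, SimpleGraph.neighborSet_bot, Set.ncard_empty]

@[simp]
lemma edgeCount_bot : edgeCount (⊥ : SimpleGraph V) = 0 := by
  rw [edgeCount, SimpleGraph.edgeSet_bot, Set.ncard_empty]

variable (G : SimpleGraph V) (H : SimpleGraph W)

@[simp]
lemma deg_sum_inl (v : V) : deg (G ⊕g H) (.inl v) = deg G v := by
  rw [deg, SimpleGraph.neighborSet_sum_inl, Set.ncard_image_of_injective _ Sum.inl_injective, deg]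

@[simp]
lemma deg_sum_inr (w : W) : deg (G ⊕g H) (.inr w) = deg H w := by
  rw [deg, SimpleGraph.neighborSet_sum_inr, Set.ncard_image_of_injective _ Sum.inr_injective, deg]

lemma edgeCount_sum [Fintype V] [Fintype W] :
    edgeCount (G ⊕g H) = edgeCount G + edgeCount H := by
  have hsum := sum_deg_eq_two_mul_edgeCount (G ⊕g H)
  have hG := sum_deg_eq_two_mul_edgeCount G
  have hH := sum_deg_eq_two_mul_edgeCount H
  simp only [Fintype.sum_sum_type, deg_sum_inl, deg_sum_inr] at hsum
  omega

end Sum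

section CompleteBipartite

variable (V W : Type*)

@[simp]
lemma deg_completeBipartiteGraph_inl (v : V) :
    deg (completeBipartiteGraph V W) (.inl v) = Nat.card W := by
  have : (completeBipartiteGraph V W).neighborSet (.inl v) = Set.range Sum.inr := by
    ext (_ | _) <;> simp
  rw [deg, this, Set.ncard_range_of_injective Sum.inr_injective]

@[simp]
lemma deg_completeBipartiteGraph_inr (w : W) :
    deg (completeBipartiteGraph V W) (.inr w) = Nat.card V := by
  have : (completeBipartiteGraph V W).neighborSet (.inr w) = Set.range Sum.inl := by
    ext (_ | _) <;> simp
  rw [deg, this, Set.ncard_range_of_injective Sum.inl_injective]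

lemma edgeCount_completeBipartiteGraph [Fintype V] [Fintype W] :
    edgeCount (completeBipartiteGraph V W) = Fintype.card V * Fintype.card W := by
  have hsum := sum_deg_eq_two_mul_edgeCount (completeBipartiteGraph V W)
  simp only [Fintype.sum_sum_type, deg_completeBipartiteGraph_inl, deg_completeBipartiteGraph_inr,
    sum_const, card_univ, smul_eq_mul, Nat.card_eq_fintype_card] at hsum
  linarith

end CompleteBipartite

section TightGraph

/-- In the notation of the paper, `A` consists of the pendant vertices `(_, true)`, `C` of the
vertices `(.inr (w, false), false)` spanning `K_{q,q}`, and `B` of the remaining vertices; the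
theorem takes `q = p - 1` and `a = (p - 1)(p - 3)`. -/
def tightGraph (a q : ℕ) : SimpleGraph ((Fin a ⊕ (Fin q ⊕ Fin q) × Bool) × Bool) :=
  corona (⊥ ⊕g corona (completeBipartiteGraph (Fin q) (Fin q)))

variable {a q : ℕ}

lemma card_tightGraph_base : Fintype.card (Fin a ⊕ (Fin q ⊕ Fin q) × Bool) = a + 4 * q := by
  simp only [Fintype.card_sum, Fintype.card_prod, Fintype.card_fin, Fintype.card_bool]
  ring

lemma matchNum_tightGraph : matchNum (tightGraph a q) = a + 4 * q := by
  rw [tightGraph, matchNum_corona, card_tightGraph_base]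

lemma indepNum_tightGraph : indepNum (tightGraph a q) = a + 4 * q := by
  rw [tightGraph, indepNum_corona, card_tightGraph_base]

lemma edgeCount_tightGraph : edgeCount (tightGraph a q) = a + q * q + 6 * q := by
  rw [tightGraph, edgeCount_corona, edgeCount_sum, edgeCount_bot, edgeCount_corona,
    edgeCount_completeBipartiteGraph, card_tightGraph_base]
  simp only [Fintype.card_sum, Fintype.card_fin]
  ring

lemma deg_tightGraph_core (w : Fin q ⊕ Fin q) :
    deg (tightGraph a q) (.inr (w, false), false) = q + 2 := by
  rcases w with _ | _ <;> simp [tightGraph, deg_corona_false]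

lemma deg_tightGraph_le (x : (Fin a ⊕ (Fin q ⊕ Fin q) × Bool) × Bool) :
    deg (tightGraph a q) x ≤ q + 2 := by
  rcases x with ⟨_ | ⟨w, _ | _⟩, _ | _⟩
  all_goals first
    | exact (deg_tightGraph_core w).le
    | simp [tightGraph, deg_corona_true, deg_corona_false]

lemma colorable_tightGraph : (tightGraph a q).Colorable 2 := by
  refine colorable_corona (SimpleGraph.colorable_sum.mpr ⟨?_, colorable_corona ?_⟩)
  · exact (SimpleGraph.colorable_one_iff.mpr rfl).mono one_le_two
  · simpa using (SimpleGraph.CompleteBipartiteGraph.bicoloring (Fin q) (Fin q)).colorable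

lemma annNum_tightGraph (hq : 0 < q) (ha : a + 2 * q = q * q) :
    annNum (tightGraph a q) = 2 * a + 6 * q := by
  have hcard : Fintype.card ((Fin a ⊕ (Fin q ⊕ Fin q) × Bool) × Bool) = 2 * a + 8 * q := by
    rw [Fintype.card_prod, card_tightGraph_base, Fintype.card_bool]
    ring
  have hm := edgeCount_tightGraph (a := a) (q := q)
  apply le_antisymm
  · refine annNum_le deg_tightGraph_le ?_
    obtain ⟨s, rfl⟩ : ∃ s, q = s + 1 := ⟨q - 1, by omega⟩
    rw [hcard, hm, show 2 * a + 8 * (s + 1) - (2 * a + 6 * (s + 1) + 1) = 2 * s + 1 by omega]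
    nlinarith
  · let core : (Fin q ⊕ Fin q) ↪ (Fin a ⊕ (Fin q ⊕ Fin q) × Bool) × Bool :=
      ⟨fun w => (.inr (w, false), false), fun _ _ h => by simpa using h⟩
    have hS := sub_card_le_annNum (G := tightGraph a q) (univ.map core) (by
      rw [sum_map, sum_const_nat fun w _ =>
        show deg (tightGraph a q) (core w) = q + 2 from deg_tightGraph_core w, card_univ,
        Fintype.card_sum, Fintype.card_fin, hm]
      nlinarith)
    simp only [card_map, card_univ, Fintype.card_sum, Fintype.card_fin, hcard] at hS
    omega

end TightGraph

lemma two_add_sub_two_mul_sqrt_one_add {μ n : ℝ} (hn : 0 ≤ n) (h : 1 + μ = n ^ 2) :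
    2 + μ - 2 * √(1 + μ) = (n - 1) ^ 2 := by
  rw [h, Real.sqrt_sq hn]
  linear_combination h

theorem stmt15 (p : ℕ) (hp : 3 ≤ p) :
    ∃ G : SimpleGraph (Fin (2 * p ^ 2 - 2)), G.Colorable 2 ∧
      matchNum G = p ^ 2 - 1 ∧ indepNum G = p ^ 2 - 1 ∧
      annNum G = 2 * p ^ 2 - 2 * p ∧ edgeCount G = 2 * p ^ 2 - 2 ∧
      (annNum G : ℝ) - (indepNum G : ℝ) = ((p : ℝ) - 1) ^ 2 ∧
      (annNum G : ℝ) - (indepNum G : ℝ) =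
        2 + (matchNum G : ℝ) - 2 * Real.sqrt (1 + (matchNum G : ℝ)) := by
  obtain ⟨r, rfl⟩ : ∃ r, p = r + 3 := ⟨p - 3, by omega⟩
  have hsq : (r + 3) ^ 2 = (r + 2) * r + 4 * (r + 2) + 1 := by ring
  have hcard : Fintype.card ((Fin ((r + 2) * r) ⊕ (Fin (r + 2) ⊕ Fin (r + 2)) × Bool) × Bool) =
      2 * (r + 3) ^ 2 - 2 := by
    rw [Fintype.card_prod, card_tightGraph_base, Fintype.card_bool]
    omega
  let f := SimpleGraph.Iso.map (Fintype.equivFinOfCardEq hcard) (tightGraph ((r + 2) * r) (r + 2))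
  have hcore : (r + 2) * r + 2 * (r + 2) = (r + 2) * (r + 2) := by ring
  refine ⟨_, colorable_tightGraph.of_hom f.symm.toHom, ?_⟩
  rw [← matchNum_congr f, ← indepNum_congr f, ← annNum_congr f, edgeCount_congr f,
    matchNum_tightGraph, indepNum_tightGraph, annNum_tightGraph (by omega) hcore,
    edgeCount_tightGraph]
  refine ⟨by omega, by omega, by omega, by omega, ?_, ?_⟩
  · push_cast
    ring
  · rw [two_add_sub_two_mul_sqrt_one_add (n := r + 3) (by positivity) (by push_cast; ring)]
    push_cast
    ring

end AnnPaper
end
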